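/- arXiv:1210.0395 — 5 statements merged into one kernel-verified Lean document; each statement's English description precedes it below -/
import Mathlib

section
/- Let g be the 6-dimensional Lie algebra with complex structure defined by dω¹ = dω² = 0, dω³ = ρ ω¹² + ω^{1 1̄} + λ ω^{1 2̄} + D ω^{2 2̄} (Family I). Then the (2,2)-form ω^{12}∧ω̄^{12} lies in the image of ∂∂̄ : Λ^{1,1} → Λ^{2,2} if and only if 2 Re D − λ² − ρ ≠ 0; concretely, ∂∂̄(ω^{3 3̄}) = (2 Re D − λ² − ρ) ω^{12 1̄2̄}, and ∂∂̄ vanishes on all other basic (1,1)-forms ω^{j k̄} with (j,k) ≠ (3,3). -/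
/-
`ω i` and `ωb i` are the coframe elements ω^{i+1} and ω̄^{i+1} (indices shifted by one), and
`dl`, `db` stand for ∂ and ∂̄.

For antiderivations, ∂∂̄(α ∧ β) = ∂∂̄α ∧ β + ∂̄α ∧ ∂β − ∂α ∧ ∂̄β + α ∧ ∂∂̄β whenever α is a
1-form and ∂̄α a 2-form. In Family I every ω^j, ω̄^k is ∂∂̄-closed and ω¹, ω², ω̄¹, ω̄² are
closed, so ∂∂̄ω^{j k̄} vanishes unless j = k = 3, where it equals
∂̄ω³ ∧ ∂ω̄³ − ∂ω³ ∧ ∂̄ω̄³ = (D + D̄ − λ² − ρ²) ω^{12 1̄2̄}. Hence ∂∂̄(Λ^{1,1}) is the line through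
this form, which is nonzero as a wedge of independent covectors, and ρ² = ρ for ρ ∈ {0, 1}.
-/

noncomputable section

open Submodule LinearMap

abbrev E : Type := ExteriorAlgebra ℂ (Fin 6 → ℂ)

def ω (i : Fin 3) : E := ExteriorAlgebra.ι ℂ (Pi.single (⟨i.1, by omega⟩ : Fin 6) (1 : ℂ))
def ωb (i : Fin 3) : E := ExteriorAlgebra.ι ℂ (Pi.single (⟨i.1 + 3, by omega⟩ : Fin 6) (1 : ℂ))

def IsAntider (d : E →ₗ[ℂ] E) : Prop :=
  d 1 = 0 ∧ ∀ (v : Fin 6 → ℂ) (y : E),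
    d (ExteriorAlgebra.ι ℂ v * y) =
      d (ExteriorAlgebra.ι ℂ v) * y - ExteriorAlgebra.ι ℂ v * d y

/-- Λ^{1,1}: the span of the (1,1)-monomials ω^{j k̄}. -/
def Lam11 : Submodule ℂ E := span ℂ (Set.range fun p : Fin 3 × Fin 3 => ω p.1 * ωb p.2)

open ExteriorAlgebra

theorem Submodule.mem_map_span_range_iff_of_eq_smul {K V W ι : Type*} [Field K]
    [AddCommGroup V] [Module K V] [AddCommGroup W] [Module K W] (f : V →ₗ[K] W) {v : ι → V}
    {i₀ : ι} {c : K} {x : W} (hx : x ≠ 0) (hi₀ : f (v i₀) = c • x)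
    (hv : ∀ i, i ≠ i₀ → f (v i) = 0) :
    x ∈ (span K (Set.range v)).map f ↔ c ≠ 0 := by
  refine ⟨fun hmem hc => hx ?_, fun hc => ?_⟩
  · have hker : (span K (Set.range v)).map f = ⊥ := by
      refine eq_bot_iff.2 (map_span_le _ _ _ |>.2 ?_)
      rintro _ ⟨i, rfl⟩
      by_cases hi : i = i₀
      · simp [hi, hi₀, hc]
      · simp [hv i hi]
    simpa [hker] using hmem
  · rw [← inv_smul_smul₀ hc x, ← hi₀]
    exact smul_mem _ _ (mem_map_of_mem (subset_span ⟨i₀, rfl⟩))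

theorem ExteriorAlgebra.ιMulti_ne_zero_of_linearIndependent {K V : Type*} [Field K]
    [AddCommGroup V] [Module K V] {n : ℕ} {v : Fin n → V} (hv : LinearIndependent K v) :
    ιMulti K n v ≠ 0 := by
  set s : Set.powersetCard (Fin n) n := ⟨Finset.univ, Finset.card_fin n⟩
  have hid : ⇑(Set.powersetCard.ofFinEmbEquiv.symm s) = id :=
    (Finset.orderEmbOfFin_unique s.prop (fun _ => Finset.mem_univ _) strictMono_id).symm
  have hne := (exteriorPower.ιMulti_family_linearIndependent_field (n := n) hv).ne_zero s
  rwa [Ne, ← Submodule.coe_eq_zero, exteriorPower.ιMulti_family_apply_coe,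
    ExteriorAlgebra.ιMulti_family, hid, Function.comp_id] at hne

theorem ExteriorAlgebra.mul_mem_exteriorPower_two {R M : Type*} [CommRing R] [AddCommGroup M]
    [Module R M] {x y : ExteriorAlgebra R M} (hx : x ∈ range (ι R)) (hy : y ∈ range (ι R)) :
    x * y ∈ ⋀[R]^2 M := by
  rw [exteriorPower, pow_two]
  exact Submodule.mul_mem_mul hx hy

namespace IsAntider

variable {δ δ' : E →ₗ[ℂ] E}

theorem map_mul_of_mem_range (h : IsAntider δ) {x : E} (hx : x ∈ range (ι ℂ)) (y : E) :
    δ (x * y) = δ x * y - x * δ y := by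
  obtain ⟨v, rfl⟩ := hx
  exact h.2 v y

theorem map_mul_of_mem_exteriorPower_two (h : IsAntider δ) {a : E}
    (ha : a ∈ ⋀[ℂ]^2 (Fin 6 → ℂ)) (y : E) : δ (a * y) = δ a * y + a * δ y := by
  rw [exteriorPower, pow_two] at ha
  induction ha using Submodule.mul_induction_on' with
  | mem_mul_mem x hx x' hx' =>
    rw [mul_assoc, h.map_mul_of_mem_range hx, h.map_mul_of_mem_range hx',
      h.map_mul_of_mem_range hx]
    noncomm_ring
  | add a _ b _ ha hb =>
    rw [add_mul, map_add, ha, hb, map_add]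
    noncomm_ring

theorem map_map_mul_of_mem_range (hδ : IsAntider δ) (hδ' : IsAntider δ') {x : E}
    (hx : x ∈ range (ι ℂ)) (hx₂ : δ' x ∈ ⋀[ℂ]^2 (Fin 6 → ℂ)) (y : E) :
    δ (δ' (x * y)) = δ (δ' x) * y + δ' x * δ y - δ x * δ' y + x * δ (δ' y) := by
  rw [hδ'.map_mul_of_mem_range hx, map_sub, hδ.map_mul_of_mem_exteriorPower_two hx₂,
    hδ.map_mul_of_mem_range hx]
  noncomm_ring

end IsAntider

theorem ω_mem_range (i : Fin 3) : ω i ∈ range (ι ℂ) := ⟨_, rfl⟩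

theorem ωb_mem_range (i : Fin 3) : ωb i ∈ range (ι ℂ) := ⟨_, rfl⟩

theorem ω_mul_ω_mul_ωb_mul_ωb_ne_zero : ω 0 * ω 1 * ωb 0 * ωb 1 ≠ 0 := by
  have hinj : Function.Injective ![(0 : Fin 6), 1, 3, 4] := by decide
  convert ιMulti_ne_zero_of_linearIndependent
    ((Pi.basisFun ℂ (Fin 6)).linearIndependent.comp _ hinj) using 1
  simp only [ιMulti_apply, List.ofFn_succ, List.ofFn_zero, List.prod_cons, List.prod_nil, mul_one,
    ← mul_assoc, Function.comp_apply, Pi.basisFun_apply]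
  rfl

def coframe (i : Fin 6) : E := ι ℂ (Pi.single i 1)

theorem coframe_mul_self (i : Fin 6) : coframe i * coframe i = 0 := ι_sq_zero _

theorem coframe_mul_self_mul (i : Fin 6) (x : E) : coframe i * (coframe i * x) = 0 := by
  rw [← mul_assoc, coframe_mul_self, zero_mul]

theorem coframe_mul_coframe (i j : Fin 6) : coframe i * coframe j = -(coframe j * coframe i) :=
  eq_neg_of_add_eq_zero_left (ι_add_mul_swap _ _)

theorem coframe_mul_coframe_mul (i j : Fin 6) (x : E) :
    coframe i * (coframe j * x) = -(coframe j * (coframe i * x)) := by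
  rw [← mul_assoc, coframe_mul_coframe, neg_mul, mul_assoc]

structure IsFamilyI (ρ lam : ℝ) (D : ℂ) (dl db : E →ₗ[ℂ] E) : Prop where
  isAntider_del : IsAntider dl
  isAntider_delbar : IsAntider db
  del_ω0 : dl (ω 0) = 0
  delbar_ω0 : db (ω 0) = 0
  del_ω1 : dl (ω 1) = 0
  delbar_ω1 : db (ω 1) = 0
  del_ω2 : dl (ω 2) = (ρ : ℂ) • (ω 0 * ω 1)
  delbar_ω2 : db (ω 2) = ω 0 * ωb 0 + (lam : ℂ) • (ω 0 * ωb 1) + D • (ω 1 * ωb 1)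
  del_ωb0 : dl (ωb 0) = 0
  delbar_ωb0 : db (ωb 0) = 0
  del_ωb1 : dl (ωb 1) = 0
  delbar_ωb1 : db (ωb 1) = 0
  del_ωb2 : dl (ωb 2) = ωb 0 * ω 0 + (lam : ℂ) • (ωb 0 * ω 1) + (starRingEnd ℂ D) • (ωb 1 * ω 1)
  delbar_ωb2 : db (ωb 2) = (ρ : ℂ) • (ωb 0 * ωb 1)

namespace IsFamilyI

variable {ρ lam : ℝ} {D : ℂ} {dl db : E →ₗ[ℂ] E} (h : IsFamilyI ρ lam D dl db)
include h

theorem del_ω_eq_zero_of_ne {j : Fin 3} (hj : j ≠ 2) : dl (ω j) = 0 := by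
  fin_cases j
  exacts [h.del_ω0, h.del_ω1, absurd rfl hj]

theorem delbar_ω_eq_zero_of_ne {j : Fin 3} (hj : j ≠ 2) : db (ω j) = 0 := by
  fin_cases j
  exacts [h.delbar_ω0, h.delbar_ω1, absurd rfl hj]

theorem del_ωb_eq_zero_of_ne {k : Fin 3} (hk : k ≠ 2) : dl (ωb k) = 0 := by
  fin_cases k
  exacts [h.del_ωb0, h.del_ωb1, absurd rfl hk]

theorem delbar_ωb_eq_zero_of_ne {k : Fin 3} (hk : k ≠ 2) : db (ωb k) = 0 := by
  fin_cases k
  exacts [h.delbar_ωb0, h.delbar_ωb1, absurd rfl hk]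

theorem delbar_ω_mem_exteriorPower_two (j : Fin 3) : db (ω j) ∈ ⋀[ℂ]^2 (Fin 6 → ℂ) := by
  by_cases hj : j = 2
  · subst hj
    rw [h.delbar_ω2]
    exact add_mem (add_mem (mul_mem_exteriorPower_two (ω_mem_range 0) (ωb_mem_range 0))
      (Submodule.smul_mem _ _ (mul_mem_exteriorPower_two (ω_mem_range 0) (ωb_mem_range 1))))
      (Submodule.smul_mem _ _ (mul_mem_exteriorPower_two (ω_mem_range 1) (ωb_mem_range 1)))
  · rw [h.delbar_ω_eq_zero_of_ne hj]
    exact zero_mem _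

theorem del_delbar_ω (j : Fin 3) : dl (db (ω j)) = 0 := by
  by_cases hj : j = 2
  · subst hj
    simp only [h.delbar_ω2, map_add, map_smul, h.isAntider_del.map_mul_of_mem_range (ω_mem_range _),
      h.del_ω0, h.del_ω1, h.del_ωb0, h.del_ωb1, zero_mul, mul_zero, sub_zero, smul_zero, add_zero]
  · rw [h.delbar_ω_eq_zero_of_ne hj, map_zero]

theorem del_delbar_ωb (k : Fin 3) : dl (db (ωb k)) = 0 := by
  by_cases hk : k = 2
  · subst hk
    simp only [h.delbar_ωb2, map_smul, h.isAntider_del.map_mul_of_mem_range (ωb_mem_range _),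
      h.del_ωb0, h.del_ωb1, zero_mul, mul_zero, sub_zero, smul_zero]
  · rw [h.delbar_ωb_eq_zero_of_ne hk, map_zero]

theorem del_delbar_ω_mul_ωb (j k : Fin 3) :
    dl (db (ω j * ωb k)) = db (ω j) * dl (ωb k) - dl (ω j) * db (ωb k) := by
  rw [h.isAntider_del.map_map_mul_of_mem_range h.isAntider_delbar (ω_mem_range j)
    (h.delbar_ω_mem_exteriorPower_two j), h.del_delbar_ω, h.del_delbar_ωb]
  noncomm_ring

theorem del_delbar_ω_mul_ωb_eq_zero {j k : Fin 3} (hjk : ¬(j = 2 ∧ k = 2)) :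
    dl (db (ω j * ωb k)) = 0 := by
  rw [h.del_delbar_ω_mul_ωb]
  by_cases hj : j = 2
  · have hk : k ≠ 2 := fun hk => hjk ⟨hj, hk⟩
    rw [h.del_ωb_eq_zero_of_ne hk, h.delbar_ωb_eq_zero_of_ne hk, mul_zero, mul_zero, sub_zero]
  · rw [h.del_ω_eq_zero_of_ne hj, h.delbar_ω_eq_zero_of_ne hj, zero_mul, zero_mul, sub_zero]

theorem delbar_ω2_mul_del_ωb2_sub :
    db (ω 2) * dl (ωb 2) - dl (ω 2) * db (ωb 2) =
      (D + starRingEnd ℂ D - (lam : ℂ) ^ 2 - (ρ : ℂ) ^ 2) • (ω 0 * ω 1 * ωb 0 * ωb 1) := by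
  rw [h.delbar_ω2, h.del_ωb2, h.del_ω2, h.delbar_ωb2]
  generalize (lam : ℂ) = L, (ρ : ℂ) = R, starRingEnd ℂ D = D'
  simp only [show ω 0 = coframe 0 from rfl, show ω 1 = coframe 1 from rfl,
    show ωb 0 = coframe 3 from rfl, show ωb 1 = coframe 4 from rfl]
  -- the guard `j < i` orients the anticommutation rules for `simp`
  simp (config := { decide := true }) only [
    fun (i j : Fin 6) (_ : j < i) => coframe_mul_coframe i j,
    fun (i j : Fin 6) (_ : j < i) => coframe_mul_coframe_mul i j, coframe_mul_self,
    coframe_mul_self_mul, mul_assoc, smul_mul_assoc, mul_smul_comm, mul_add, add_mul, smul_neg,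
    mul_neg, neg_neg, smul_zero, mul_zero, add_zero, zero_add, neg_zero]
  module

end IsFamilyI

theorem del_delbar_image_family_I_general
    (ρ lam : ℝ) (D : ℂ) (hρ : ρ = 0 ∨ ρ = 1)
    (dl db : E →ₗ[ℂ] E)
    (hdl : IsAntider dl) (hdb : IsAntider db)
    (h1l : dl (ω 0) = 0) (h1b : db (ω 0) = 0)
    (h2l : dl (ω 1) = 0) (h2b : db (ω 1) = 0)
    (h3l : dl (ω 2) = (ρ : ℂ) • (ω 0 * ω 1))
    (h3b : db (ω 2) = ω 0 * ωb 0 + (lam : ℂ) • (ω 0 * ωb 1) + D • (ω 1 * ωb 1))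
    (h1lc : dl (ωb 0) = 0) (h1bc : db (ωb 0) = 0)
    (h2lc : dl (ωb 1) = 0) (h2bc : db (ωb 1) = 0)
    (h3lc : dl (ωb 2) = ωb 0 * ω 0 + (lam : ℂ) • (ωb 0 * ω 1)
      + (starRingEnd ℂ D) • (ωb 1 * ω 1))
    (h3bc : db (ωb 2) = (ρ : ℂ) • (ωb 0 * ωb 1)) :
    (ω 0 * ω 1 * ωb 0 * ωb 1 ∈ Submodule.map (dl ∘ₗ db) Lam11 ↔
        2 * D.re - lam ^ 2 - ρ ≠ 0) ∧
      dl (db (ω 2 * ωb 2)) =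
        ((2 * D.re - lam ^ 2 - ρ : ℝ) : ℂ) • (ω 0 * ω 1 * ωb 0 * ωb 1) ∧
      ∀ j k : Fin 3, ¬(j = 2 ∧ k = 2) → dl (db (ω j * ωb k)) = 0 := by
  have h : IsFamilyI ρ lam D dl db :=
    ⟨hdl, hdb, h1l, h1b, h2l, h2b, h3l, h3b, h1lc, h1bc, h2lc, h2bc, h3lc, h3bc⟩
  have hscalar : D + starRingEnd ℂ D - (lam : ℂ) ^ 2 - (ρ : ℂ) ^ 2 =
      ((2 * D.re - lam ^ 2 - ρ : ℝ) : ℂ) := by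
    rw [Complex.add_conj]
    rcases hρ with rfl | rfl <;> push_cast <;> ring
  have h33 : dl (db (ω 2 * ωb 2)) =
      ((2 * D.re - lam ^ 2 - ρ : ℝ) : ℂ) • (ω 0 * ω 1 * ωb 0 * ωb 1) := by
    rw [h.del_delbar_ω_mul_ωb, h.delbar_ω2_mul_del_ωb2_sub, hscalar]
  refine ⟨?_, h33, fun j k => h.del_delbar_ω_mul_ωb_eq_zero⟩
  rw [Lam11, Submodule.mem_map_span_range_iff_of_eq_smul _ ω_mul_ω_mul_ωb_mul_ωb_ne_zero
    (i₀ := (2, 2)) h33, Ne, Complex.ofReal_eq_zero]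
  rintro ⟨j, k⟩ hjk
  exact h.del_delbar_ω_mul_ωb_eq_zero fun ⟨hj, hk⟩ => hjk (Prod.ext hj hk)

theorem del_delbar_image_family_I
    (ρ lam : ℝ) (D : ℂ) (hρ : ρ = 0 ∨ ρ = 1) (hlam : 0 ≤ lam)
    (d dl db : E →ₗ[ℂ] E)
    (hd : IsAntider d) (hdl : IsAntider dl) (hdb : IsAntider db)
    (hsum : d = dl + db)
    (h1l : dl (ω 0) = 0) (h1b : db (ω 0) = 0)
    (h2l : dl (ω 1) = 0) (h2b : db (ω 1) = 0)
    (h3l : dl (ω 2) = (ρ : ℂ) • (ω 0 * ω 1))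
    (h3b : db (ω 2) = ω 0 * ωb 0 + (lam : ℂ) • (ω 0 * ωb 1) + D • (ω 1 * ωb 1))
    (h1lc : dl (ωb 0) = 0) (h1bc : db (ωb 0) = 0)
    (h2lc : dl (ωb 1) = 0) (h2bc : db (ωb 1) = 0)
    (h3lc : dl (ωb 2) = ωb 0 * ω 0 + (lam : ℂ) • (ωb 0 * ω 1)
      + (starRingEnd ℂ D) • (ωb 1 * ω 1))
    (h3bc : db (ωb 2) = (ρ : ℂ) • (ωb 0 * ωb 1)) :
    (ω 0 * ω 1 * ωb 0 * ωb 1 ∈ Submodule.map (dl ∘ₗ db) Lam11 ↔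
        2 * D.re - lam ^ 2 - ρ ≠ 0) ∧
      dl (db (ω 2 * ωb 2)) =
        ((2 * D.re - lam ^ 2 - ρ : ℝ) : ℂ) • (ω 0 * ω 1 * ωb 0 * ωb 1) ∧
      ∀ j k : Fin 3, ¬(j = 2 ∧ k = 2) → dl (db (ω j * ωb k)) = 0 :=
  del_delbar_image_family_I_general ρ lam D hρ dl db hdl hdb h1l h1b h2l h2b h3l h3b h1lc h1bc h2lc
    h2bc h3lc h3bc
end
end

section
/- Let g be a 6-dimensional nilpotent Lie algebra with an abelian complex structure J (i.e. ∂ vanishes on g^{1,0}, equivalently d(g^{1,0}) ⊆ Λ^{1,1}), and suppose g is not abelian. Then dim H^{0,1}_∂̄(g) = 3 > dim H^{0,1}_BC(g), where H^{0,1}_∂̄(g) = {α ∈ g^{0,1} : ∂̄α = 0} and H^{0,1}_BC(g) = {α ∈ g^{0,1} : dα = 0}. -/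
/- The abelian condition d(g^{1,0}) ⊆ Λ^{1,1} passes by conjugation to d(g^{0,1}) ⊆ Λ^{1,1}.
Then ∂̄ω̄^j = dω̄^j - ∂ω̄^j lies in Λ^{1,1} ∩ Λ^{0,2} = 0, so every (0,1)-form is ∂̄-closed and
H^{0,1}_∂̄ is all of g^{0,1}, of dimension 3. On the other hand, if dω^j ≠ 0 then its
conjugate dω̄^j is nonzero too, so ker d misses ω̄^j and H^{0,1}_BC is a proper subspace. -/

noncomputable section

open Submodule LinearMap

def Lam20 : Submodule ℂ E := span ℂ (Set.range fun p : Fin 3 × Fin 3 => ω p.1 * ω p.2)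
def Lam02 : Submodule ℂ E := span ℂ (Set.range fun p : Fin 3 × Fin 3 => ωb p.1 * ωb p.2)

theorem ExteriorAlgebra.contractLeft_ι_mul_ι {R M : Type*} [CommRing R] [AddCommGroup M]
    [Module R M] (f : Module.Dual R M) (v w : M) :
    CliffordAlgebra.contractLeft (Q := 0) f (ι R v * ι R w) = f v • ι R w - f w • ι R v := by
  rw [CliffordAlgebra.contractLeft_ι_mul, CliffordAlgebra.contractLeft_ι, ← Algebra.commutes,
    ← Algebra.smul_def]

theorem Submodule.finrank_inf_ker_lt {K V W : Type*} [DivisionRing K] [AddCommGroup V]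
    [Module K V] [AddCommGroup W] [Module K W] {S : Submodule K V} [FiniteDimensional K S]
    (f : V →ₗ[K] W) {x : V} (hxS : x ∈ S) (hfx : f x ≠ 0) :
    Module.finrank K ↥(S ⊓ ker f) < Module.finrank K S :=
  finrank_lt_finrank_of_lt <| inf_le_left.lt_of_ne fun h => hfx (h ▸ hxS).2

theorem range_ωb : Set.range ωb = {ωb 0, ωb 1, ωb 2} := by
  ext
  simp [Fin.exists_fin_succ, eq_comm]

theorem linearIndependent_ωb : LinearIndependent ℂ ωb := by
  have hinj : Function.Injective fun j : Fin 3 => (⟨j.1 + 3, by omega⟩ : Fin 6) :=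
    fun a b hab => by simpa [Fin.ext_iff] using hab
  exact ((Pi.linearIndependent_single_one (Fin 6) ℂ).map' (ExteriorAlgebra.ι ℂ)
    (ker_eq_bot.mpr ExteriorAlgebra.ι_leftInverse.injective)).comp _ hinj

theorem finrank_span_ωb : Module.finrank ℂ ↥(span ℂ (Set.range ωb)) = 3 := by
  rw [finrank_span_eq_card linearIndependent_ωb, Fintype.card_fin]

def contractω (k : Fin 3) : E →ₗ[ℂ] E :=
  CliffordAlgebra.contractLeft (LinearMap.proj (⟨k.1, by omega⟩ : Fin 6))

theorem contractω_ω_mul_ωb (k a b : Fin 3) :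
    contractω k (ω a * ωb b) = if a = k then ωb b else 0 := by
  rw [contractω, ω, ωb, ExteriorAlgebra.contractLeft_ι_mul_ι]
  have hb : ¬(k : ℕ) = b + 3 := by omega
  rcases eq_or_ne a k with rfl | h
  · simp [hb]
  · simp [Fin.ext_iff, hb, h, Fin.val_ne_of_ne h.symm]

theorem contractω_ωb_mul_ωb (k a b : Fin 3) : contractω k (ωb a * ωb b) = 0 := by
  rw [contractω, ωb, ωb, ExteriorAlgebra.contractLeft_ι_mul_ι]
  have ha : ¬(k : ℕ) = a + 3 := by omega
  have hb : ¬(k : ℕ) = b + 3 := by omega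
  simp [Fin.ext_iff, ha, hb]

theorem contractω_eq_zero_of_mem_Lam02 {x : E} (hx : x ∈ Lam02) (k : Fin 3) :
    contractω k x = 0 := by
  induction hx using span_induction with
  | mem y hy => obtain ⟨p, rfl⟩ := hy; exact contractω_ωb_mul_ωb k p.1 p.2
  | zero => exact map_zero _
  | add y z _ _ hy hz => rw [map_add, hy, hz, add_zero]
  | smul c y _ hy => rw [map_smul, hy, smul_zero]

theorem eq_zero_of_mem_Lam11_of_contractω_eq_zero {x : E} (hx : x ∈ Lam11)
    (h : ∀ k, contractω k x = 0) : x = 0 := by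
  obtain ⟨c, rfl⟩ := (mem_span_range_iff_exists_fun ℂ).mp hx
  have hc : ∀ k b, c (k, b) = 0 := by
    intro k b
    have hk : ∑ b, c (k, b) • ωb b = 0 := by
      simpa [Fintype.sum_prod_type, contractω_ω_mul_ωb, smul_ite] using h k
    exact Fintype.linearIndependent_iff.mp linearIndependent_ωb _ hk b
  simp [hc]

theorem disjoint_Lam11_Lam02 : Disjoint Lam11 Lam02 :=
  disjoint_def.mpr fun _ h11 h02 =>
    eq_zero_of_mem_Lam11_of_contractω_eq_zero h11 (contractω_eq_zero_of_mem_Lam02 h02)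

theorem ωb_mul_ω (a b : Fin 3) : ωb a * ω b = -(ω b * ωb a) :=
  eq_neg_of_add_eq_zero_left (ExteriorAlgebra.ι_add_mul_swap _ _)

theorem map_mem_Lam11 {τ : ℂ →+* ℂ} (σ : E →ₛₗ[τ] E) (hσω : ∀ j, σ (ω j) = ωb j)
    (hσωb : ∀ j, σ (ωb j) = ω j) (hσmul : ∀ x y : E, σ (x * y) = σ x * σ y) {x : E}
    (hx : x ∈ Lam11) : σ x ∈ Lam11 := by
  induction hx using span_induction with
  | mem y hy =>
    obtain ⟨p, rfl⟩ := hy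
    rw [hσmul, hσω, hσωb, ωb_mul_ω]
    exact neg_mem (subset_span ⟨(p.2, p.1), rfl⟩)
  | zero => rw [map_zero]; exact zero_mem _
  | add y z _ _ hy hz => rw [map_add]; exact add_mem hy hz
  | smul c y _ hy => rw [map_smulₛₗ]; exact smul_mem _ _ hy

theorem abelian_dolbeault_vs_bott_chern_01_general
    (d dl db : E →ₗ[ℂ] E)
    (hsum : d = dl + db)
    -- bidegree conditions on the components of d in degree one
    (hbideg01 : ∀ j : Fin 3, dl (ωb j) ∈ Lam11 ∧ db (ωb j) ∈ Lam02)
    -- conjugation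
    (σ : E →ₛₗ[starRingEnd ℂ] E)
    (hσω : ∀ j : Fin 3, σ (ω j) = ωb j) (hσωb : ∀ j : Fin 3, σ (ωb j) = ω j)
    (hσmul : ∀ x y : E, σ (x * y) = σ x * σ y)
    (hσd : ∀ x : E, σ (d x) = d (σ x))
    -- J is abelian: d(g^{1,0}) ⊆ Λ^{1,1} (and, by conjugation, d(g^{0,1}) ⊆ Λ^{1,1})
    (habel : ∀ j : Fin 3, d (ω j) ∈ Lam11)
    -- g is not abelian
    (hnonab : ∃ j : Fin 3, d (ω j) ≠ 0) :
    Module.finrank ℂ ↥(span ℂ {ωb 0, ωb 1, ωb 2} ⊓ ker db) = 3 ∧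
      Module.finrank ℂ ↥(span ℂ {ωb 0, ωb 1, ωb 2} ⊓ ker d) < 3 := by
  rw [← range_ωb]
  have hdωb : ∀ j, d (ωb j) ∈ Lam11 := fun j => by
    rw [← hσω, ← hσd]
    exact map_mem_Lam11 σ hσω hσωb hσmul (habel j)
  have hdbωb : ∀ j, db (ωb j) = 0 := fun j => by
    have h11 : db (ωb j) ∈ Lam11 := by
      rw [show db = d - dl by rw [hsum, add_sub_cancel_left]]
      exact sub_mem (hdωb j) (hbideg01 j).1
    exact disjoint_def.mp disjoint_Lam11_Lam02 _ h11 (hbideg01 j).2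
  have hker : span ℂ (Set.range ωb) ≤ ker db := span_le.mpr (Set.range_subset_iff.mpr hdbωb)
  obtain ⟨j, hj⟩ := hnonab
  have hdωbj : d (ωb j) ≠ 0 := fun h0 => hj (by rw [← hσωb, ← hσd, h0, map_zero])
  constructor
  · rw [inf_eq_left.mpr hker, finrank_span_ωb]
  · have := FiniteDimensional.span_of_finite ℂ (Set.finite_range ωb)
    exact (finrank_inf_ker_lt d (subset_span (Set.mem_range_self j)) hdωbj).trans_eq
      finrank_span_ωb

theorem abelian_dolbeault_vs_bott_chern_01
    (d dl db : E →ₗ[ℂ] E)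
    (hd : IsAntider d) (hdl : IsAntider dl) (hdb : IsAntider db)
    (hsum : d = dl + db)
    (hd2 : ∀ x : E, d (d x) = 0)
    -- bidegree conditions on the components of d in degree one
    (hbideg10 : ∀ j : Fin 3, dl (ω j) ∈ Lam20 ∧ db (ω j) ∈ Lam11)
    (hbideg01 : ∀ j : Fin 3, dl (ωb j) ∈ Lam11 ∧ db (ωb j) ∈ Lam02)
    -- conjugation
    (σ : E →ₛₗ[starRingEnd ℂ] E)
    (hσω : ∀ j : Fin 3, σ (ω j) = ωb j) (hσωb : ∀ j : Fin 3, σ (ωb j) = ω j)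
    (hσmul : ∀ x y : E, σ (x * y) = σ x * σ y)
    (hσd : ∀ x : E, σ (d x) = d (σ x))
    -- J is abelian: d(g^{1,0}) ⊆ Λ^{1,1} (and, by conjugation, d(g^{0,1}) ⊆ Λ^{1,1})
    (habel : ∀ j : Fin 3, d (ω j) ∈ Lam11)
    -- g is not abelian
    (hnonab : ∃ j : Fin 3, d (ω j) ≠ 0) :
    Module.finrank ℂ ↥(span ℂ {ωb 0, ωb 1, ωb 2} ⊓ ker db) = 3 ∧
      Module.finrank ℂ ↥(span ℂ {ωb 0, ωb 1, ωb 2} ⊓ ker d) < 3 :=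
  abelian_dolbeault_vs_bott_chern_01_general d dl db hsum hbideg01 σ hσω hσωb hσmul hσd habel hnonab

end
end

section
/- Let g be a 6-dimensional 2-step nilpotent Lie algebra with complex structure given by the Family I equations with ρ = 1: dω¹ = dω² = 0, dω³ = ω¹² + ω^{1 1̄} + λ ω^{1 2̄} + D ω^{2 2̄}. Then H^{3,2}_∂̄(g) is spanned by the classes of ω^{123 1̄3̄} and ω^{123 2̄3̄}, H^{3,2}_A(g) is spanned by the same classes, and the natural map H^{3,2}_∂̄(g) → H^{3,2}_A(g) is injective. -/
/-! `∂̄Λ^{3,1}` is the line through `c = ω^{123 1̄2̄}`: `ω^{123}` is `∂̄`-closed and only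
`∂̄ω̄³ = ω^{1̄2̄}` survives. `∂Λ^{2,2}` lies in the same line, because `∂` kills `Λ^{2,0}` and
`∂ω̄³` only involves `ω̄¹` and `ω̄²`. As `∂̄` also kills `Λ^{0,2}`, every (3,2)-form is `∂̄`-closed,
so both cohomologies are `Λ^{3,2} / ℂc`, spanned by the classes of `ω^{123 1̄3̄}` and
`ω^{123 2̄3̄}`, and the comparison map between them is the identity. -/

noncomputable section

open Submodule LinearMap

def Lam22 : Submodule ℂ E :=
  span ℂ (Set.range fun p : (Fin 3 × Fin 3) × Fin 3 × Fin 3 =>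
    ω p.1.1 * ω p.1.2 * ωb p.2.1 * ωb p.2.2)
def Lam31 : Submodule ℂ E :=
  span ℂ (Set.range fun k : Fin 3 => ω 0 * ω 1 * ω 2 * ωb k)
def Lam32 : Submodule ℂ E :=
  span ℂ {ω 0 * ω 1 * ω 2 * (ωb 0 * ωb 1), ω 0 * ω 1 * ω 2 * (ωb 0 * ωb 2),
    ω 0 * ω 1 * ω 2 * (ωb 1 * ωb 2)}

namespace IsAntider

variable {d : E →ₗ[ℂ] E}

theorem map_ι_mul_ι (hd : IsAntider d) (u v : Fin 6 → ℂ) :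
    d (ExteriorAlgebra.ι ℂ u * ExteriorAlgebra.ι ℂ v) =
      d (ExteriorAlgebra.ι ℂ u) * ExteriorAlgebra.ι ℂ v -
        ExteriorAlgebra.ι ℂ u * d (ExteriorAlgebra.ι ℂ v) := by
  simpa [hd.1] using hd.2 u (ExteriorAlgebra.ι ℂ v)

theorem map_ι_mul_ι_mul (hd : IsAntider d) (u v : Fin 6 → ℂ) (y : E) :
    d (ExteriorAlgebra.ι ℂ u * ExteriorAlgebra.ι ℂ v * y) =
      d (ExteriorAlgebra.ι ℂ u * ExteriorAlgebra.ι ℂ v) * y +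
        ExteriorAlgebra.ι ℂ u * ExteriorAlgebra.ι ℂ v * d y := by
  rw [hd.map_ι_mul_ι, mul_assoc, hd.2, hd.2]
  noncomm_ring

theorem map_ι_mul_ι_mul_ι_mul (hd : IsAntider d) (u v w : Fin 6 → ℂ) (y : E) :
    d (ExteriorAlgebra.ι ℂ u * ExteriorAlgebra.ι ℂ v * ExteriorAlgebra.ι ℂ w * y) =
      d (ExteriorAlgebra.ι ℂ u * ExteriorAlgebra.ι ℂ v * ExteriorAlgebra.ι ℂ w) * y -
        ExteriorAlgebra.ι ℂ u * ExteriorAlgebra.ι ℂ v * ExteriorAlgebra.ι ℂ w * d y := by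
  rw [mul_assoc _ _ y, hd.map_ι_mul_ι_mul, hd.map_ι_mul_ι_mul, hd.2, hd.2]
  noncomm_ring

end IsAntider

def gen (m : Fin 6) : E := ExteriorAlgebra.ι ℂ (Pi.single m 1)

theorem ω_zero : ω 0 = gen 0 := rfl
theorem ω_one : ω 1 = gen 1 := rfl
theorem ω_two : ω 2 = gen 2 := rfl
theorem ωb_zero : ωb 0 = gen 3 := rfl
theorem ωb_one : ωb 1 = gen 4 := rfl
theorem ωb_two : ωb 2 = gen 5 := rfl

theorem IsAntider.map_gen_mul {d : E →ₗ[ℂ] E} (hd : IsAntider d) (m : Fin 6) (y : E) :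
    d (gen m * y) = d (gen m) * y - gen m * d y :=
  hd.2 _ y

theorem gen_mul_self (m : Fin 6) : gen m * gen m = 0 :=
  ExteriorAlgebra.ι_sq_zero _

theorem gen_mul_gen_mul_self (m : Fin 6) (y : E) : gen m * (gen m * y) = 0 := by
  rw [← mul_assoc, gen_mul_self, zero_mul]

-- The hypothesis `n < m` orients these rewrites, so that `simp` sorts products of generators.
theorem gen_mul_gen_of_lt {m n : Fin 6} (_ : n < m) : gen m * gen n = -(gen n * gen m) :=
  eq_neg_of_add_eq_zero_left (ExteriorAlgebra.ι_add_mul_swap _ _)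

theorem gen_mul_gen_mul_of_lt {m n : Fin 6} (h : n < m) (y : E) :
    gen m * (gen n * y) = -(gen n * (gen m * y)) := by
  rw [← mul_assoc, gen_mul_gen_of_lt h, neg_mul, mul_assoc]

-- The structure equations `dω³ = ω^{12} + ω^{11̄} + λω^{12̄} + Dω^{22̄}`, `dω¹ = dω² = 0` and
-- their conjugates, split into bidegrees.
structure IsDelFamilyI (lam : ℝ) (D : ℂ) (dl : E →ₗ[ℂ] E) : Prop where
  isAntider : IsAntider dl
  map_ω_zero : dl (ω 0) = 0
  map_ω_one : dl (ω 1) = 0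
  map_ω_two : dl (ω 2) = ω 0 * ω 1
  map_ωb_zero : dl (ωb 0) = 0
  map_ωb_one : dl (ωb 1) = 0
  map_ωb_two : dl (ωb 2) = ωb 0 * ω 0 + (lam : ℂ) • (ωb 0 * ω 1)
      + (starRingEnd ℂ D) • (ωb 1 * ω 1)

structure IsDelbarFamilyI (lam : ℝ) (D : ℂ) (db : E →ₗ[ℂ] E) : Prop where
  isAntider : IsAntider db
  map_ω_zero : db (ω 0) = 0
  map_ω_one : db (ω 1) = 0
  map_ω_two : db (ω 2) = ω 0 * ωb 0 + (lam : ℂ) • (ω 0 * ωb 1) + D • (ω 1 * ωb 1)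
  map_ωb_zero : db (ωb 0) = 0
  map_ωb_one : db (ωb 1) = 0
  map_ωb_two : db (ωb 2) = ωb 0 * ωb 1

namespace IsDelFamilyI

variable {lam : ℝ} {D : ℂ} {dl : E →ₗ[ℂ] E}

theorem map_ω_mul_ω (h : IsDelFamilyI lam D dl) (p q : Fin 3) : dl (ω p * ω q) = 0 := by
  obtain ⟨hd, h0, h1, h2, -, -, -⟩ := h
  simp only [ω_zero, ω_one, ω_two] at h0 h1 h2
  fin_cases p <;> fin_cases q <;>
    simp +decide only [Fin.isValue, Fin.reduceFinMk, ω_zero, ω_one, ω_two,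
      hd.map_gen_mul, h0, h1, h2, map_zero, map_neg, gen_mul_self, gen_mul_gen_mul_self,
      gen_mul_gen_of_lt, gen_mul_gen_mul_of_lt, mul_zero, zero_mul, neg_zero, sub_self]

theorem map_ω_mul_ω_mul (h : IsDelFamilyI lam D dl) (p q : Fin 3) (y : E) :
    dl (ω p * ω q * y) = ω p * ω q * dl y := by
  have leibniz : dl (ω p * ω q * y) = dl (ω p * ω q) * y + ω p * ω q * dl y :=
    h.isAntider.map_ι_mul_ι_mul _ _ y
  rw [leibniz, h.map_ω_mul_ω, zero_mul, zero_add]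

theorem map_ω_mul_ω_mul_ωb_mul_ωb_mem (h : IsDelFamilyI lam D dl) (p q r s : Fin 3) :
    dl (ω p * ω q * ωb r * ωb s) ∈ span ℂ {ω 0 * ω 1 * ω 2 * (ωb 0 * ωb 1)} := by
  rw [mul_assoc _ (ωb r), h.map_ω_mul_ω_mul]
  obtain ⟨hd, -, -, -, h0, h1, h2⟩ := h
  simp only [ω_zero, ω_one, ωb_zero, ωb_one, ωb_two] at h0 h1 h2
  fin_cases p <;> fin_cases q <;> fin_cases r <;> fin_cases s <;>
    simp +decide only [Fin.isValue, Fin.reduceFinMk, ω_zero, ω_one, ω_two,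
      ωb_zero, ωb_one, ωb_two, hd.map_gen_mul, h0, h1, h2, map_zero, map_neg, gen_mul_self,
      gen_mul_gen_mul_self, gen_mul_gen_of_lt, gen_mul_gen_mul_of_lt, mul_assoc, mul_zero, zero_mul,
      neg_zero, sub_self, mul_neg, neg_mul, neg_neg, mul_add, mul_smul_comm, zero_sub, zero_add,
      add_zero, smul_zero, smul_neg, zero_mem, neg_mem_iff, mem_span_singleton_self, smul_mem]

theorem map_Lam22_le (h : IsDelFamilyI lam D dl) :
    map dl Lam22 ≤ span ℂ {ω 0 * ω 1 * ω 2 * (ωb 0 * ωb 1)} := by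
  rw [Lam22, Submodule.map_span, span_le]
  rintro _ ⟨_, ⟨⟨⟨p, q⟩, r, s⟩, rfl⟩, rfl⟩
  exact h.map_ω_mul_ω_mul_ωb_mul_ωb_mem p q r s

end IsDelFamilyI

namespace IsDelbarFamilyI

variable {lam : ℝ} {D : ℂ} {db : E →ₗ[ℂ] E}

theorem map_ω_mul_ω_mul_ω (h : IsDelbarFamilyI lam D db) : db (ω 0 * ω 1 * ω 2) = 0 := by
  obtain ⟨hd, h0, h1, h2, -, -, -⟩ := h
  simp only [ω_zero, ω_one, ω_two, ωb_zero, ωb_one] at h0 h1 h2 ⊢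
  simp +decide only [mul_assoc, hd.map_gen_mul, h0, h1, h2,
    gen_mul_gen_mul_self, gen_mul_gen_mul_of_lt, zero_mul, mul_add, mul_neg, mul_smul_comm,
    smul_zero, smul_neg, neg_zero, zero_sub, sub_zero, add_zero]

theorem map_ω_mul_ω_mul_ω_mul (h : IsDelbarFamilyI lam D db) (y : E) :
    db (ω 0 * ω 1 * ω 2 * y) = -(ω 0 * ω 1 * ω 2 * db y) := by
  have leibniz : db (ω 0 * ω 1 * ω 2 * y) = db (ω 0 * ω 1 * ω 2) * y - ω 0 * ω 1 * ω 2 * db y :=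
    h.isAntider.map_ι_mul_ι_mul_ι_mul _ _ _ y
  rw [leibniz, h.map_ω_mul_ω_mul_ω, zero_mul, zero_sub]

theorem map_ωb_mul_ωb (h : IsDelbarFamilyI lam D db) (r s : Fin 3) : db (ωb r * ωb s) = 0 := by
  obtain ⟨hd, -, -, -, h0, h1, h2⟩ := h
  simp only [ωb_zero, ωb_one, ωb_two] at h0 h1 h2
  fin_cases r <;> fin_cases s <;>
    simp +decide only [Fin.isValue, Fin.reduceFinMk, ωb_zero, ωb_one,
      ωb_two, hd.map_gen_mul, h0, h1, h2, map_zero, map_neg, gen_mul_self, gen_mul_gen_mul_self,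
      gen_mul_gen_of_lt, gen_mul_gen_mul_of_lt, mul_zero, zero_mul, neg_zero, sub_self]

theorem Lam32_le_ker (h : IsDelbarFamilyI lam D db) : Lam32 ≤ ker db := by
  simp only [Lam32, span_le, Set.insert_subset_iff, Set.singleton_subset_iff, SetLike.mem_coe,
    mem_ker, h.map_ω_mul_ω_mul_ω_mul, h.map_ωb_mul_ωb, mul_zero, neg_zero, and_self]

theorem map_Lam31 (h : IsDelbarFamilyI lam D db) :
    map db Lam31 = span ℂ {ω 0 * ω 1 * ω 2 * (ωb 0 * ωb 1)} := by
  have image : ∀ k, db (ω 0 * ω 1 * ω 2 * ωb k) = -(ω 0 * ω 1 * ω 2 * db (ωb k)) :=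
    fun k ↦ h.map_ω_mul_ω_mul_ω_mul _
  apply le_antisymm
  · rw [Lam31, Submodule.map_span, span_le]
    rintro _ ⟨_, ⟨k, rfl⟩, rfl⟩
    fin_cases k <;>
      simp only [Fin.isValue, Fin.reduceFinMk, SetLike.mem_coe, image, h.map_ωb_zero,
        h.map_ωb_one, h.map_ωb_two, mul_zero, neg_zero, zero_mem, neg_mem_iff,
        mem_span_singleton_self]
  · rw [span_singleton_le_iff_mem]
    refine ⟨-(ω 0 * ω 1 * ω 2 * ωb 2), neg_mem (subset_span ⟨2, rfl⟩), ?_⟩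
    rw [map_neg, image, h.map_ωb_two, neg_neg]

end IsDelbarFamilyI

theorem Lam32_eq_span_sup_span :
    Lam32 = span ℂ {ω 0 * ω 1 * ω 2 * (ωb 0 * ωb 2), ω 0 * ω 1 * ω 2 * (ωb 1 * ωb 2)} ⊔
      span ℂ {ω 0 * ω 1 * ω 2 * (ωb 0 * ωb 1)} := by
  rw [← span_union, Set.union_comm, Set.singleton_union, Lam32]

theorem dolbeault_aeppli_32_family_I_rho_one_general
    (lam : ℝ) (D : ℂ)
    (dl db : E →ₗ[ℂ] E)
    (hdl : IsAntider dl) (hdb : IsAntider db)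
    (h1l : dl (ω 0) = 0) (h1b : db (ω 0) = 0)
    (h2l : dl (ω 1) = 0) (h2b : db (ω 1) = 0)
    (h3l : dl (ω 2) = ω 0 * ω 1)
    (h3b : db (ω 2) = ω 0 * ωb 0 + (lam : ℂ) • (ω 0 * ωb 1) + D • (ω 1 * ωb 1))
    (h1lc : dl (ωb 0) = 0) (h1bc : db (ωb 0) = 0)
    (h2lc : dl (ωb 1) = 0) (h2bc : db (ωb 1) = 0)
    (h3lc : dl (ωb 2) = ωb 0 * ω 0 + (lam : ℂ) • (ωb 0 * ω 1)
      + (starRingEnd ℂ D) • (ωb 1 * ω 1))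
    (h3bc : db (ωb 2) = ωb 0 * ωb 1) :
    -- H^{3,2}_∂̄ is spanned by the classes of a and b:
    Lam32 ⊓ ker db =
      span ℂ {ω 0 * ω 1 * ω 2 * (ωb 0 * ωb 2), ω 0 * ω 1 * ω 2 * (ωb 1 * ωb 2)} ⊔
        Submodule.map db Lam31 ∧
    -- H^{3,2}_A is spanned by the same classes:
    Lam32 =
      span ℂ {ω 0 * ω 1 * ω 2 * (ωb 0 * ωb 2), ω 0 * ω 1 * ω 2 * (ωb 1 * ωb 2)} ⊔
        (Submodule.map dl Lam22 ⊔ Submodule.map db Lam31) ∧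
    -- the natural map H^{3,2}_∂̄ → H^{3,2}_A is injective:
    ∀ α ∈ Lam32, db α = 0 →
      α ∈ Submodule.map dl Lam22 ⊔ Submodule.map db Lam31 →
        α ∈ Submodule.map db Lam31 := by
  have hdel : IsDelFamilyI lam D dl := ⟨hdl, h1l, h2l, h3l, h1lc, h2lc, h3lc⟩
  have hdelbar : IsDelbarFamilyI lam D db := ⟨hdb, h1b, h2b, h3b, h1bc, h2bc, h3bc⟩
  have aeppli_eq : map dl Lam22 ⊔ map db Lam31 = map db Lam31 :=
    sup_eq_right.mpr (hdel.map_Lam22_le.trans hdelbar.map_Lam31.ge)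
  refine ⟨?_, ?_, fun α _ _ hα ↦ aeppli_eq ▸ hα⟩
  · rw [inf_eq_left.mpr hdelbar.Lam32_le_ker, hdelbar.map_Lam31, ← Lam32_eq_span_sup_span]
  · rw [aeppli_eq, hdelbar.map_Lam31, ← Lam32_eq_span_sup_span]

theorem dolbeault_aeppli_32_family_I_rho_one
    (lam : ℝ) (D : ℂ) (hlam : 0 ≤ lam)
    (d dl db : E →ₗ[ℂ] E)
    (hd : IsAntider d) (hdl : IsAntider dl) (hdb : IsAntider db)
    (hsum : d = dl + db)
    (hdl2 : ∀ x, dl (dl x) = 0) (hdb2 : ∀ x, db (db x) = 0)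
    (hanti : ∀ x, dl (db x) + db (dl x) = 0)
    (h1l : dl (ω 0) = 0) (h1b : db (ω 0) = 0)
    (h2l : dl (ω 1) = 0) (h2b : db (ω 1) = 0)
    (h3l : dl (ω 2) = ω 0 * ω 1)
    (h3b : db (ω 2) = ω 0 * ωb 0 + (lam : ℂ) • (ω 0 * ωb 1) + D • (ω 1 * ωb 1))
    (h1lc : dl (ωb 0) = 0) (h1bc : db (ωb 0) = 0)
    (h2lc : dl (ωb 1) = 0) (h2bc : db (ωb 1) = 0)
    (h3lc : dl (ωb 2) = ωb 0 * ω 0 + (lam : ℂ) • (ωb 0 * ω 1)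
      + (starRingEnd ℂ D) • (ωb 1 * ω 1))
    (h3bc : db (ωb 2) = ωb 0 * ωb 1) :
    -- H^{3,2}_∂̄ is spanned by the classes of a and b:
    Lam32 ⊓ ker db =
      span ℂ {ω 0 * ω 1 * ω 2 * (ωb 0 * ωb 2), ω 0 * ω 1 * ω 2 * (ωb 1 * ωb 2)} ⊔
        Submodule.map db Lam31 ∧
    -- H^{3,2}_A is spanned by the same classes:
    Lam32 =
      span ℂ {ω 0 * ω 1 * ω 2 * (ωb 0 * ωb 2), ω 0 * ω 1 * ω 2 * (ωb 1 * ωb 2)} ⊔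
        (Submodule.map dl Lam22 ⊔ Submodule.map db Lam31) ∧
    -- the natural map H^{3,2}_∂̄ → H^{3,2}_A is injective:
    ∀ α ∈ Lam32, db α = 0 →
      α ∈ Submodule.map dl Lam22 ⊔ Submodule.map db Lam31 →
        α ∈ Submodule.map db Lam31 :=
  dolbeault_aeppli_32_family_I_rho_one_general lam D dl db hdl hdb h1l h1b h2l h2b h3l h3b h1lc h1bc
    h2lc h2bc h3lc h3bc

end
end

section
/- Let g be a 6-dimensional Lie algebra with complex structure in Family I (dω¹ = dω² = 0, dω³ = ρ ω¹² + ω^{1 1̄} + λ ω^{1 2̄} + D ω^{2 2̄}) with λ ≠ 0, admitting a balanced metric 2F = i(ω^{1 1̄} + s² ω^{2 2̄} + t² ω^{3 3̄}) + u ω^{1 2̄} − ū ω^{2 1̄} with s² > |u|² and s² + D = i λ ū. If furthermore |D| + Re D ≠ λ²/2, then the (2,2)-form γ = (λ s² − 2 Im(Du))(ω^{13 2̄3̄} + ω^{23 1̄3̄} + λ ω^{23 2̄3̄}) − (λ − 2 Im u)(λ ω^{13 1̄3̄} + D̄ ω^{13 2̄3̄} + D ω^{23 1̄3̄}) is nonzero.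 -/
/- If γ = 0, pairing γ with the coordinate functionals of ω^{13 1̄3̄} and ω^{23 2̄3̄} gives
λ = 2 Im u and λ s² = 2 Im(Du). The real and imaginary parts of s² + D = iλū then give
s² = Re D + 2 (Re u)² and |D|² = s⁴, so |D| + Re D = s² + Re D = λ Im u = λ²/2. -/
noncomputable section

open Submodule LinearMap

section Minor

variable {R : Type*} [CommRing R] {n k : ℕ}

open ExteriorAlgebra

/-- The coefficient of `e (S 0) ∧ ⋯ ∧ e (S (k - 1))`, `e` the standard basis. -/
def exteriorMinor (S : Fin k → Fin n) : ExteriorAlgebra R (Fin n → R) →ₗ[R] R :=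
  liftAlternating (Function.update 0 k
    ((Matrix.detRowAlternating : (Fin k → R) [⋀^Fin k]→ₗ[R] R).compLinearMap
      (LinearMap.funLeft R R S)))

theorem exteriorMinor_ιMulti (S : Fin k → Fin n) (v : Fin k → Fin n → R) :
    exteriorMinor S (ιMulti R k v) = (Matrix.of fun i j => v i (S j)).det := by
  rw [exteriorMinor, liftAlternating_apply_ιMulti, Function.update_self]
  rfl

theorem exteriorMinor_ιMulti_single_of_eq {S T : Fin k → Fin n} (hS : S.Injective)
    (hT : T = S) :
    exteriorMinor S (ιMulti R k fun i => Pi.single (T i) 1) = 1 := by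
  subst hT
  have hone : (Matrix.of fun i j => (Pi.single (T i) 1 : Fin n → R) (T j)) = 1 := by
    ext i j
    simp [Pi.single_apply, Matrix.one_apply, hS.eq_iff, eq_comm]
  rw [exteriorMinor_ιMulti, hone, Matrix.det_one]

theorem exteriorMinor_ιMulti_single_of_not_subset {S T : Fin k → Fin n}
    (hT : ∃ i, ∀ j, S j ≠ T i) :
    exteriorMinor S (ιMulti R k fun i => Pi.single (T i) 1) = 0 := by
  obtain ⟨i, hi⟩ := hT
  rw [exteriorMinor_ιMulti]
  exact Matrix.det_eq_zero_of_row_eq_zero i fun j => by simp [Pi.single_apply, hi j]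

end Minor

theorem ω_mul_ω_mul_ωb_mul_ωb (a b c d : Fin 3) :
    ω a * ω b * ωb c * ωb d = ExteriorAlgebra.ιMulti ℂ 4 fun i =>
      Pi.single (![Fin.castAdd 3 a, Fin.castAdd 3 b, c.addNat 3, d.addNat 3] i) 1 := by
  simp only [ExteriorAlgebra.ιMulti_apply, List.ofFn_succ, List.ofFn_zero, List.prod_cons,
    List.prod_nil, mul_one, mul_assoc]
  rfl

theorem norm_add_re_eq_of_balanced {lam s : ℝ} {D u : ℂ} (hlam : lam ≠ 0)
    (hbalanced : (s ^ 2 : ℂ) + D = Complex.I * lam * starRingEnd ℂ u)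
    (hu : lam - 2 * u.im = 0) (hDu : lam * s ^ 2 - 2 * (D * u).im = 0) :
    ‖D‖ + D.re = lam ^ 2 / 2 := by
  have hre : s ^ 2 + D.re = lam * u.im := by
    simpa [← Complex.ofReal_pow] using congrArg Complex.re hbalanced
  have him : D.im = lam * u.re := by
    simpa [← Complex.ofReal_pow] using congrArg Complex.im hbalanced
  have hs : s ^ 2 = D.re + 2 * u.re ^ 2 := by
    refine mul_left_cancel₀ hlam ?_
    rw [Complex.mul_im] at hDu
    linear_combination hDu + 2 * u.re * him - D.re * hu
  have hnorm : ‖D‖ = s ^ 2 := by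
    refine (sq_eq_sq₀ (norm_nonneg D) (sq_nonneg s)).mp ?_
    rw [Complex.sq_norm, Complex.normSq_apply]
    linear_combination (D.im + lam * u.re) * him - 2 * u.re ^ 2 * hre - (s ^ 2 + D.re) * hs
      + lam * u.re ^ 2 * hu
  linear_combination hnorm + hre - lam / 2 * hu

theorem gamma_nonzero_family_I_general
    (lam : ℝ) (D : ℂ) (hlam0 : lam ≠ 0)
    (s : ℝ) (u : ℂ)
    (hbalanced : (s ^ 2 : ℂ) + D = Complex.I * (lam : ℂ) * (starRingEnd ℂ u))
    -- the complex structure admits balanced metrics: |D| + Re D ≠ λ²/2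
    (hD : ‖D‖ + D.re ≠ lam ^ 2 / 2) :
    ((lam * s ^ 2 - 2 * (D * u).im : ℝ) : ℂ) •
        (ω 0 * ω 2 * ωb 1 * ωb 2 + ω 1 * ω 2 * ωb 0 * ωb 2
          + (lam : ℂ) • (ω 1 * ω 2 * ωb 1 * ωb 2)) -
      ((lam - 2 * u.im : ℝ) : ℂ) •
        ((lam : ℂ) • (ω 0 * ω 2 * ωb 0 * ωb 2)
          + (starRingEnd ℂ D) • (ω 0 * ω 2 * ωb 1 * ωb 2)
          + D • (ω 1 * ω 2 * ωb 0 * ωb 2)) ≠ 0 := by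
  intro hγ
  -- indices `0, 1, 2` of `Fin 6` are `ω 0, ω 1, ω 2` and `3, 4, 5` are `ωb 0, ωb 1, ωb 2`
  have h0235 := congrArg (exteriorMinor ![0, 2, 3, 5]) hγ
  have h1245 := congrArg (exteriorMinor ![1, 2, 4, 5]) hγ
  simp (disch := decide) only [ω_mul_ω_mul_ωb_mul_ωb, map_sub, map_add, map_smul, map_zero,
    exteriorMinor_ιMulti_single_of_eq, exteriorMinor_ιMulti_single_of_not_subset,
    smul_eq_mul, mul_zero, mul_one, add_zero, zero_add, zero_sub, sub_zero, neg_eq_zero,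
    mul_eq_zero, Complex.ofReal_eq_zero, hlam0, or_false] at h0235 h1245
  exact hD (norm_add_re_eq_of_balanced hlam0 hbalanced h0235 h1245)

theorem gamma_nonzero_family_I
    (ρ lam : ℝ) (D : ℂ) (hρ : ρ = 0 ∨ ρ = 1) (hlam : 0 ≤ lam) (hlam0 : lam ≠ 0)
    (d : E →ₗ[ℂ] E) (hd : IsAntider d)
    (h1 : d (ω 0) = 0) (h2 : d (ω 1) = 0)
    (h3 : d (ω 2) = (ρ : ℂ) • (ω 0 * ω 1) + ω 0 * ωb 0
      + (lam : ℂ) • (ω 0 * ωb 1) + D • (ω 1 * ωb 1))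
    (h1c : d (ωb 0) = 0) (h2c : d (ωb 1) = 0)
    (h3c : d (ωb 2) = (ρ : ℂ) • (ωb 0 * ωb 1) + ωb 0 * ω 0
      + (lam : ℂ) • (ωb 0 * ω 1) + (starRingEnd ℂ D) • (ωb 1 * ω 1))
    -- the balanced metric 2F = i(ω^{1 1̄} + s²ω^{2 2̄} + t²ω^{3 3̄}) + u ω^{1 2̄} − ū ω^{2 1̄}
    (s t : ℝ) (hs : s ≠ 0) (ht : t ≠ 0) (u : ℂ)
    (F : E)
    (hF : (2 : ℂ) • F = Complex.I • ((ω 0 * ωb 0) + (s ^ 2 : ℂ) • (ω 1 * ωb 1)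
      + (t ^ 2 : ℂ) • (ω 2 * ωb 2)) + u • (ω 0 * ωb 1) - (starRingEnd ℂ u) • (ω 1 * ωb 0))
    (hmetric : ‖u‖ ^ 2 < s ^ 2)
    (hbalanced : (s ^ 2 : ℂ) + D = Complex.I * (lam : ℂ) * (starRingEnd ℂ u))
    -- the complex structure admits balanced metrics: |D| + Re D ≠ λ²/2
    (hD : ‖D‖ + D.re ≠ lam ^ 2 / 2) :
    ((lam * s ^ 2 - 2 * (D * u).im : ℝ) : ℂ) •
        (ω 0 * ω 2 * ωb 1 * ωb 2 + ω 1 * ω 2 * ωb 0 * ωb 2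
          + (lam : ℂ) • (ω 1 * ω 2 * ωb 1 * ωb 2)) -
      ((lam - 2 * u.im : ℝ) : ℂ) •
        ((lam : ℂ) • (ω 0 * ω 2 * ωb 0 * ωb 2)
          + (starRingEnd ℂ D) • (ω 0 * ω 2 * ωb 1 * ωb 2)
          + D • (ω 1 * ω 2 * ωb 0 * ωb 2)) ≠ 0 :=
  gamma_nonzero_family_I_general lam D hlam0 s u hbalanced hD

end
end

section
/- Let M be a compact complex manifold and suppose the natural map H^{n,n-1}_∂̄(M) → H^{n,n-1}_A(M) (sending a Dolbeault class to its Aeppli class) is injective, where n = dim_ℂ M. Then any Gauduchon metric on M is strongly Gauduchon: if F is a positive (1,1)-form with ∂∂̄(F^{n-1}) = 0, then ∂(F^{n-1}) = ∂̄α for some (n, n-2)-form α. -/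
open Submodule LinearMap

theorem gauduchon_is_strongly_gauduchon_of_injective_general
    {X2 X1 X0 Y Z : Type}
    [AddCommGroup X2] [Module ℂ X2] [AddCommGroup X1] [Module ℂ X1]
    [AddCommGroup X0] [Module ℂ X0] [AddCommGroup Y] [Module ℂ Y]
    [AddCommGroup Z] [Module ℂ Z]
    (dbX2 : X2 →ₗ[ℂ] X1)   -- ∂̄ : Ω^{n,n-2} → Ω^{n,n-1}
    (dbX1 : X1 →ₗ[ℂ] X0)   -- ∂̄ : Ω^{n,n-1} → Ω^{n,n}
    (dlY : Y →ₗ[ℂ] X1)     -- ∂ : Ω^{n-1,n-1} → Ω^{n,n-1}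
    (dbY : Y →ₗ[ℂ] Z)      -- ∂̄ : Ω^{n-1,n-1} → Ω^{n-1,n}
    (dlZ : Z →ₗ[ℂ] X0)     -- ∂ : Ω^{n-1,n} → Ω^{n,n}
    (hanti : ∀ y : Y, dbX1 (dlY y) + dlZ (dbY y) = 0)
    -- the natural map H^{n,n-1}_∂̄(M) → H^{n,n-1}_A(M) is injective
    (hinj : ∀ α : X1, dbX1 α = 0 →
      α ∈ range dlY ⊔ range dbX2 → α ∈ range dbX2) :
    -- every Gauduchon metric is strongly Gauduchon: if G = F^{n-1} with ∂∂̄G = 0,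
    -- then ∂G = ∂̄α for some α
    ∀ G : Y, dlZ (dbY G) = 0 → ∃ α : X2, dlY G = dbX2 α := by
  intro G hG
  -- ∂G is ∂̄-closed because ∂̄∂ = -∂∂̄, and its Aeppli class vanishes because it is ∂-exact.
  have hclosed : dbX1 (dlY G) = 0 := by simpa [hG] using hanti G
  obtain ⟨α, hα⟩ := hinj _ hclosed (mem_sup_left (mem_range_self dlY G))
  exact ⟨α, hα.symm⟩

theorem gauduchon_is_strongly_gauduchon_of_injective
    (n : ℕ) (hn : 1 ≤ n)
    {X2 X1 X0 Y Z : Type}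
    [AddCommGroup X2] [Module ℂ X2] [AddCommGroup X1] [Module ℂ X1]
    [AddCommGroup X0] [Module ℂ X0] [AddCommGroup Y] [Module ℂ Y]
    [AddCommGroup Z] [Module ℂ Z]
    (dbX2 : X2 →ₗ[ℂ] X1)   -- ∂̄ : Ω^{n,n-2} → Ω^{n,n-1}
    (dbX1 : X1 →ₗ[ℂ] X0)   -- ∂̄ : Ω^{n,n-1} → Ω^{n,n}
    (dlY : Y →ₗ[ℂ] X1)     -- ∂ : Ω^{n-1,n-1} → Ω^{n,n-1}
    (dbY : Y →ₗ[ℂ] Z)      -- ∂̄ : Ω^{n-1,n-1} → Ω^{n-1,n}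
    (dlZ : Z →ₗ[ℂ] X0)     -- ∂ : Ω^{n-1,n} → Ω^{n,n}
    (hdb2 : ∀ x : X2, dbX1 (dbX2 x) = 0)
    (hanti : ∀ y : Y, dbX1 (dlY y) + dlZ (dbY y) = 0)
    -- the natural map H^{n,n-1}_∂̄(M) → H^{n,n-1}_A(M) is injective
    (hinj : ∀ α : X1, dbX1 α = 0 →
      α ∈ range dlY ⊔ range dbX2 → α ∈ range dbX2) :
    -- every Gauduchon metric is strongly Gauduchon: if G = F^{n-1} with ∂∂̄G = 0,
    -- then ∂G = ∂̄α for some α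
    ∀ G : Y, dlZ (dbY G) = 0 → ∃ α : X2, dlY G = dbX2 α :=
  gauduchon_is_strongly_gauduchon_of_injective_general dbX2 dbX1 dlY dbY dlZ hanti hinj
end
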